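/- Causal consistency for CCSK: any two coinitial and cofinal traces in the proved LTS for CCSK are causally equivalent. -/

import Mathlib

namespace CCSK

/-- Labels: names, co-names, and the silent action τ. -/
inductive Lab : Type
  | name : ℕ → Lab
  | coname : ℕ → Lab
  | tau : Lab
deriving DecidableEq

/-- Complement of a label. -/
def Lab.co : Lab → Lab
  | .name n => .coname n
  | .coname n => .name n
  | .tau => .tau

abbrev Key := ℕ

/-- CCSK processes (with a replication operator for the extended calculus). -/
inductive Proc : Type
  | nil : Proc
  | pre : Lab → Proc → Proc          -- α.X
  | kpre : Lab → Key → Proc → Proc   -- α[k].X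
  | par : Proc → Proc → Proc
  | sum : Proc → Proc → Proc
  | res : Proc → ℕ → Proc            -- X \ a
  | repl : Proc → Proc               -- !X
deriving DecidableEq

/-- Keys occurring in a process. -/
def Proc.keys : Proc → Set Key
  | .nil => ∅
  | .pre _ X => X.keys
  | .kpre _ k X => insert k X.keys
  | .par X Y => X.keys ∪ Y.keys
  | .sum X Y => X.keys ∪ Y.keys
  | .res X _ => X.keys
  | .repl X => X.keys

/-- A process is standard when it contains no keys. -/
def Proc.std (X : Proc) : Prop := X.keys = ∅

/-- Multiset of keyed-prefix occurrences (label, key). -/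
def Proc.keyed : Proc → Multiset (Lab × Key)
  | .nil => 0
  | .pre _ X => X.keyed
  | .kpre a k X => (a, k) ::ₘ X.keyed
  | .par X Y => X.keyed + Y.keyed
  | .sum X Y => X.keyed + Y.keyed
  | .res X _ => X.keyed
  | .repl X => X.keyed

/-- Enhanced keyed labels. -/
inductive ELab : Type
  | base : Lab → Key → ELab          -- α[k]
  | parL : ELab → ELab               -- |_L θ
  | parR : ELab → ELab               -- |_R θ
  | bang : ELab → ELab               -- !θ (replication)
  | syn : ELab → ELab → ELab         -- ⟨θ_L, θ_R⟩
deriving DecidableEq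

/-- Underlying action label ℓ(θ). -/
def ELab.act : ELab → Lab
  | .base a _ => a
  | .parL θ => θ.act
  | .parR θ => θ.act
  | .bang θ => θ.act
  | .syn _ _ => .tau

/-- Key of an enhanced keyed label. -/
def ELab.key : ELab → Key
  | .base _ k => k
  | .parL θ => θ.key
  | .parR θ => θ.key
  | .bang θ => θ.key
  | .syn θ _ => θ.key

/-- Dependency relation ⋖ on enhanced keyed labels (including the extension
for replication labels). -/
inductive Dep : ELab → ELab → Prop
  | base (a : Lab) (k : Key) (θ : ELab) : Dep (.base a k) θ
  | parL {θ θ'} : Dep θ θ' → Dep (.parL θ) (.parL θ')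
  | parR {θ θ'} : Dep θ θ' → Dep (.parR θ) (.parR θ')
  | synSrcL {θL θR θ} : Dep θL θ → Dep (.syn θL θR) θ
  | synSrcR {θL θR θ} : Dep θR θ → Dep (.syn θL θR) θ
  | synTgtL {θ θL θR} : Dep θ θL → Dep θ (.syn θL θR)
  | synTgtR {θ θL θR} : Dep θ θR → Dep θ (.syn θL θR)
  | synSynL {θL θR θL' θR'} : Dep θL θL' → Dep (.syn θL θR) (.syn θL' θR')
  | synSynR {θL θR θL' θR'} : Dep θR θR' → Dep (.syn θL θR) (.syn θL' θR')
  | bangBang (θ : ELab) : Dep (.bang θ) (.bang θ)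
  | bangParL (θ θ' : ELab) : Dep (.bang θ) (.parL θ')
  | bangParRSynL (θL θR θ'' : ELab) : Dep (.bang (.syn θL θR)) (.parR (.parL θ''))
  | bangParRSynR (θL θR θ'' : ELab) : Dep (.bang (.syn θL θR)) (.parR (.parR θ''))
  | bangParR {θ θ' : ELab} : Dep θ θ' → Dep (.bang θ) (.parR θ')

/-- Concurrency of labels: no dependency in either direction. -/
def Conc (θ₁ θ₂ : ELab) : Prop := ¬ Dep θ₁ θ₂ ∧ ¬ Dep θ₂ θ₁

/-- The proved forward LTS for CCSK (without replication rules). -/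
inductive Fwd : Proc → ELab → Proc → Prop
  | act {a k X} : Proc.std X → Fwd (.pre a X) (.base a k) (.kpre a k X)
  | pre {a : Lab} {k : Key} {X X' : Proc} {θ : ELab} : Fwd X θ X' → θ.key ≠ k →
      Fwd (.kpre a k X) θ (.kpre a k X')
  | res {X X' : Proc} {θ : ELab} {a : ℕ} : Fwd X θ X' → θ.act ≠ .name a → θ.act ≠ .coname a →
      Fwd (X.res a) θ (X'.res a)
  | parL {X X' Y : Proc} {θ : ELab} : Fwd X θ X' → θ.key ∉ Y.keys →
      Fwd (X.par Y) (.parL θ) (X'.par Y)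
  | parR {Y Y' X : Proc} {θ : ELab} : Fwd Y θ Y' → θ.key ∉ X.keys →
      Fwd (X.par Y) (.parR θ) (X.par Y')
  | syn {X X' Y Y' : Proc} {θ₁ θ₂ : ELab} : Fwd X θ₁ X' → Fwd Y θ₂ Y' →
      θ₁.act ≠ .tau → θ₂.act = θ₁.act.co → θ₂.key = θ₁.key →
      Fwd (X.par Y) (.syn (.parL θ₁) (.parR θ₂)) (X'.par Y')
  | sumL {X θ X' Y} : Fwd X θ X' → Proc.std Y → Fwd (X.sum Y) θ (X'.sum Y)
  | sumR {Y θ Y' X} : Fwd Y θ Y' → Proc.std X → Fwd (X.sum Y) θ (X.sum Y')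

/-- The proved backward LTS for CCSK (exact symmetric of the forward one).
`Bwd X θ Y` means `X ⇝[θ] Y`. -/
inductive Bwd : Proc → ELab → Proc → Prop
  | act {a k X} : Proc.std X → Bwd (.kpre a k X) (.base a k) (.pre a X)
  | pre {a : Lab} {k : Key} {X' X : Proc} {θ : ELab} : Bwd X' θ X → θ.key ≠ k →
      Bwd (.kpre a k X') θ (.kpre a k X)
  | res {X' X : Proc} {θ : ELab} {a : ℕ} : Bwd X' θ X → θ.act ≠ .name a → θ.act ≠ .coname a →
      Bwd (X'.res a) θ (X.res a)
  | parL {X' X Y : Proc} {θ : ELab} : Bwd X' θ X → θ.key ∉ Y.keys →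
      Bwd (X'.par Y) (.parL θ) (X.par Y)
  | parR {Y' Y X : Proc} {θ : ELab} : Bwd Y' θ Y → θ.key ∉ X.keys →
      Bwd (X.par Y') (.parR θ) (X.par Y)
  | syn {X' X Y' Y : Proc} {θ₁ θ₂ : ELab} : Bwd X' θ₁ X → Bwd Y' θ₂ Y →
      θ₁.act ≠ .tau → θ₂.act = θ₁.act.co → θ₂.key = θ₁.key →
      Bwd (X'.par Y') (.syn (.parL θ₁) (.parR θ₂)) (X.par Y)
  | sumL {X' θ X Y} : Bwd X' θ X → Proc.std Y → Bwd (X'.sum Y) θ (X.sum Y)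
  | sumR {Y' θ Y X} : Bwd Y' θ Y → Proc.std X → Bwd (X.sum Y') θ (X.sum Y)

/-- Combined LTS: `Step true` is forward, `Step false` is backward. -/
def Step : Bool → Proc → ELab → Proc → Prop
  | true => Fwd
  | false => Bwd

/-- Reachability: connected to a standard process by forward/backward moves. -/
def Reachable (X : Proc) : Prop :=
  ∃ X₀ : Proc, X₀.std ∧
    Relation.ReflTransGen (fun A B => ∃ d θ, Step d A θ B) X₀ X

/-- The proved forward LTS for CCSK extended with replication. -/
inductive FwdR : Proc → ELab → Proc → Prop
  | act {a k X} : Proc.std X → FwdR (.pre a X) (.base a k) (.kpre a k X)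
  | pre {a : Lab} {k : Key} {X X' : Proc} {θ : ELab} : FwdR X θ X' → θ.key ≠ k →
      FwdR (.kpre a k X) θ (.kpre a k X')
  | res {X X' : Proc} {θ : ELab} {a : ℕ} : FwdR X θ X' → θ.act ≠ .name a → θ.act ≠ .coname a →
      FwdR (X.res a) θ (X'.res a)
  | parL {X X' Y : Proc} {θ : ELab} : FwdR X θ X' → θ.key ∉ Y.keys →
      FwdR (X.par Y) (.parL θ) (X'.par Y)
  | parR {Y Y' X : Proc} {θ : ELab} : FwdR Y θ Y' → θ.key ∉ X.keys →
      FwdR (X.par Y) (.parR θ) (X.par Y')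
  | syn {X X' Y Y' : Proc} {θ₁ θ₂ : ELab} : FwdR X θ₁ X' → FwdR Y θ₂ Y' →
      θ₁.act ≠ .tau → θ₂.act = θ₁.act.co → θ₂.key = θ₁.key →
      FwdR (X.par Y) (.syn (.parL θ₁) (.parR θ₂)) (X'.par Y')
  | sumL {X θ X' Y} : FwdR X θ X' → Proc.std Y → FwdR (X.sum Y) θ (X'.sum Y)
  | sumR {Y θ Y' X} : FwdR Y θ Y' → Proc.std X → FwdR (X.sum Y) θ (X.sum Y')
  | repl1 {X X' : Proc} {θ : ELab} : FwdR X θ X' →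
      FwdR (.repl X) (.bang θ) ((Proc.repl X).par X')
  | repl2 {X X' X'' : Proc} {θ₁ θ₂ : ELab} : FwdR X θ₁ X' → FwdR X θ₂ X'' →
      θ₁.act ≠ .tau → θ₂.act = θ₁.act.co → θ₂.key = θ₁.key →
      FwdR (.repl X) (.bang (.syn (.parL θ₁) (.parR θ₂)))
        ((Proc.repl X).par (X'.par X''))

/-- The proved backward LTS for CCSK extended with replication. -/
inductive BwdR : Proc → ELab → Proc → Prop
  | act {a k X} : Proc.std X → BwdR (.kpre a k X) (.base a k) (.pre a X)
  | pre {a : Lab} {k : Key} {X' X : Proc} {θ : ELab} : BwdR X' θ X → θ.key ≠ k →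
      BwdR (.kpre a k X') θ (.kpre a k X)
  | res {X' X : Proc} {θ : ELab} {a : ℕ} : BwdR X' θ X → θ.act ≠ .name a → θ.act ≠ .coname a →
      BwdR (X'.res a) θ (X.res a)
  | parL {X' X Y : Proc} {θ : ELab} : BwdR X' θ X → θ.key ∉ Y.keys →
      BwdR (X'.par Y) (.parL θ) (X.par Y)
  | parR {Y' Y X : Proc} {θ : ELab} : BwdR Y' θ Y → θ.key ∉ X.keys →
      BwdR (X.par Y') (.parR θ) (X.par Y)
  | syn {X' X Y' Y : Proc} {θ₁ θ₂ : ELab} : BwdR X' θ₁ X → BwdR Y' θ₂ Y →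
      θ₁.act ≠ .tau → θ₂.act = θ₁.act.co → θ₂.key = θ₁.key →
      BwdR (X'.par Y') (.syn (.parL θ₁) (.parR θ₂)) (X.par Y)
  | sumL {X' θ X Y} : BwdR X' θ X → Proc.std Y → BwdR (X'.sum Y) θ (X.sum Y)
  | sumR {Y' θ Y X} : BwdR Y' θ Y → Proc.std X → BwdR (X.sum Y') θ (X.sum Y)
  | repl1 {X' X : Proc} {θ : ELab} : BwdR X' θ X →
      BwdR ((Proc.repl X).par X') (.bang θ) (.repl X)
  | repl2 {X' X'' X : Proc} {θ₁ θ₂ : ELab} : BwdR X' θ₁ X → BwdR X'' θ₂ X →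
      θ₁.act ≠ .tau → θ₂.act = θ₁.act.co → θ₂.key = θ₁.key →
      BwdR ((Proc.repl X).par (X'.par X''))
        (.bang (.syn (.parL θ₁) (.parR θ₂))) (.repl X)

/-- Combined extended LTS. -/
def StepR : Bool → Proc → ELab → Proc → Prop
  | true => FwdR
  | false => BwdR

/-- Reachability in the extended calculus. -/
def ReachableR (X : Proc) : Prop :=
  ∃ X₀ : Proc, X₀.std ∧
    Relation.ReflTransGen (fun A B => ∃ d θ, StepR d A θ B) X₀ X

/-- Traces: sequences of composable (forward or backward) transitions. -/
inductive Trace : Proc → Proc → Type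
  | nil (X : Proc) : Trace X X
  | cons {X Y Z : Proc} (d : Bool) (θ : ELab) (s : Step d X θ Y)
      (T : Trace Y Z) : Trace X Z

/-- Composition of traces. -/
def Trace.comp : {X Y Z : Proc} → Trace X Y → Trace Y Z → Trace X Z
  | _, _, _, .nil _, U => U
  | _, _, _, .cons d θ s T, U => .cons d θ s (Trace.comp T U)

/-- Length of a trace. -/
def Trace.length : {X Y : Proc} → Trace X Y → ℕ
  | _, _, .nil _ => 0
  | _, _, .cons _ _ _ T => Trace.length T + 1

/-- All transitions of a trace have direction `d`. -/
def Trace.AllDir (d : Bool) : {X Y : Proc} → Trace X Y → Prop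
  | _, _, .nil _ => True
  | _, _, .cons d' _ _ T => d' = d ∧ Trace.AllDir d T

/-- Causal equivalence of traces: the least equivalence relation, closed under
composition, cancelling a transition followed by its reverse, and swapping the
two sides of a concurrency square. -/
inductive CEq : {X Y : Proc} → Trace X Y → Trace X Y → Prop
  | refl {X Y} (T : Trace X Y) : CEq T T
  | symm {X Y} {T T' : Trace X Y} : CEq T T' → CEq T' T
  | trans {X Y} {T T' T'' : Trace X Y} : CEq T T' → CEq T' T'' → CEq T T''
  | congr {X Y Z : Proc} {d θ} (s : Step d X θ Y) {T T' : Trace Y Z} :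
      CEq T T' → CEq (Trace.cons d θ s T) (Trace.cons d θ s T')
  | cancel {X Y Z : Proc} {d θ} (s : Step d X θ Y) (s' : Step (!d) Y θ X)
      (T : Trace X Z) :
      CEq (Trace.cons d θ s (Trace.cons (!d) θ s' T)) T
  | square {X X₁ X₂ Y Z : Proc} {d₁ d₂ θ₁ θ₂}
      (s₁ : Step d₁ X θ₁ X₁) (t₂ : Step d₂ X₁ θ₂ Y)
      (s₂ : Step d₂ X θ₂ X₂) (t₁ : Step d₁ X₂ θ₁ Y)
      (hc : Conc θ₁ θ₂) (T : Trace Y Z) :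
      CEq (Trace.cons d₁ θ₁ s₁ (Trace.cons d₂ θ₂ t₂ T))
          (Trace.cons d₂ θ₂ s₂ (Trace.cons d₁ θ₁ t₁ T))

/-- Removal of the keyed prefix α[k]. -/
def remP (a : Lab) (k : Key) : Proc → Proc
  | .nil => .nil
  | .pre b X => .pre b X
  | .kpre b m X => if b = a ∧ m = k then X else .kpre b m (remP a k X)
  | .par X Y => .par (remP a k X) (remP a k Y)
  | .sum X Y => .sum (remP a k X) (remP a k Y)
  | .res X n => .res (remP a k X) n
  | .repl X => .repl (remP a k X)

/-- rem_k^α : remove α[k] and its complement (only α[k] when α = τ). -/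
def remK (a : Lab) (k : Key) (X : Proc) : Proc :=
  if a = Lab.tau then remP a k X else remP a k (remP a.co k X)

/-- Left projection of enhanced keyed labels (partial). -/
def projL : ELab → Option ELab
  | .parL θ => some θ
  | .syn (.parL θL) _ => some θL
  | _ => none

/-- Right projection of enhanced keyed labels (partial). -/
def projR : ELab → Option ELab
  | .parR θ => some θ
  | .syn _ (.parR θR) => some θR
  | _ => none

/-- Projection selector: `true` is left, `false` is right. -/
def eproj : Bool → ELab → Option ELab
  | true => projL
  | false => projR

/-- Component selector for parallel processes. -/
def side (b : Bool) (L R : Proc) : Proc := if b then L else R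

/-- Labels of the shapes arising from a parallel composition. -/
def ParShape (θ : ELab) : Prop :=
  (∃ φ, θ = ELab.parL φ) ∨ (∃ φ, θ = ELab.parR φ) ∨
    ∃ φ ψ, θ = ELab.syn (ELab.parL φ) (ELab.parR ψ)

/-- The collapsing function σ identifying ! and |_R prefixes. -/
def collapse : ELab → ELab
  | .base a k => .base a k
  | .parL θ => .parL (collapse θ)
  | .parR θ => .parR (collapse θ)
  | .bang θ => .parR (collapse θ)
  | .syn θ₁ θ₂ => .syn (collapse θ₁) (collapse θ₂)

/-- Sub-term relation: strips sums, restrictions and executed keyed prefixes.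
`Strip X Y` means X is a sub-term of Y. -/
inductive Strip : Proc → Proc → Prop
  | refl (X : Proc) : Strip X X
  | sumL {X Y Z : Proc} : Strip X Y → Strip X (Y.sum Z)
  | sumR {X Y Z : Proc} : Strip X Y → Strip X (Z.sum Y)
  | res {X Y : Proc} {a : ℕ} : Strip X Y → Strip X (Y.res a)
  | kpre {X Y : Proc} {a : Lab} {k : Key} : Strip X Y → Strip X (.kpre a k Y)

/-- A forward transition of the proved LTS, as an object. -/
structure FTrans where
  src : Proc
  lab : ELab
  tgt : Proc
  ok : Fwd src lab tgt

/-- A backward transition of the proved LTS, as an object. -/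
structure BTrans where
  src : Proc
  lab : ELab
  tgt : Proc
  ok : Bwd src lab tgt

end CCSK

/-!
Keys make the backward LTS deterministic: a backward transition from a given process is fixed by
its key, and two coinitial backward transitions with different keys are concurrent and close a
square. By the loop lemma the same holds for a forward transition followed by a backward one, so
every trace is causally equivalent to a parabolic one, backward steps first.

Two coinitial and cofinal backward traces are equivalent: the key removed by the first step of
one of them is absent at the common target, so the other trace removes it too, and commuting that
step to the front leaves shorter traces. Now a loop `L` is equivalent to `B ; F` with `B` and the
reverse of `F` both backward from its source to the same process, whence `L ∼ F̄ ; F ∼ ε`. Finally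
`T₁ ∼ T₁ ; (T̄₁ ; T₂) ∼ T₂`, the middle being a loop.
-/

namespace CCSK

theorem Fwd.reverse {X θ Y} (h : Fwd X θ Y) : Bwd Y θ X := by
  induction h with
  | act h => exact .act h
  | pre _ hk ih => exact .pre ih hk
  | res _ h₁ h₂ ih => exact .res ih h₁ h₂
  | parL _ hk ih => exact .parL ih hk
  | parR _ hk ih => exact .parR ih hk
  | syn _ _ ht hc hk ih₁ ih₂ => exact .syn ih₁ ih₂ ht hc hk
  | sumL _ hs ih => exact .sumL ih hs
  | sumR _ hs ih => exact .sumR ih hs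

theorem Bwd.reverse {X θ Y} (h : Bwd X θ Y) : Fwd Y θ X := by
  induction h with
  | act h => exact .act h
  | pre _ hk ih => exact .pre ih hk
  | res _ h₁ h₂ ih => exact .res ih h₁ h₂
  | parL _ hk ih => exact .parL ih hk
  | parR _ hk ih => exact .parR ih hk
  | syn _ _ ht hc hk ih₁ ih₂ => exact .syn ih₁ ih₂ ht hc hk
  | sumL _ hs ih => exact .sumL ih hs
  | sumR _ hs ih => exact .sumR ih hs

theorem Step.reverse {d X θ Y} (s : Step d X θ Y) : Step (!d) Y θ X := by
  cases d
  · exact Bwd.reverse s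
  · exact Fwd.reverse s

theorem Bwd.key_mem_keys {X θ Y} (h : Bwd X θ Y) : θ.key ∈ X.keys := by
  induction h <;> simp_all [Proc.keys, ELab.key]

theorem Bwd.key_not_mem_keys {X θ Y} (h : Bwd X θ Y) : θ.key ∉ Y.keys := by
  induction h <;> simp_all [Proc.keys, ELab.key, Proc.std]

theorem Bwd.keys_subset {X θ Y} (h : Bwd X θ Y) : Y.keys ⊆ X.keys := by
  induction h <;> simp only [Proc.keys] at * <;> grind

theorem Proc.std.not_bwd {X θ Y} (hX : X.std) : ¬ Bwd X θ Y := fun h => by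
  rw [Proc.std] at hX
  simpa [hX] using h.key_mem_keys

@[simp] theorem dep_parL_parL_iff {a b : ELab} : Dep (.parL a) (.parL b) ↔ Dep a b :=
  ⟨fun h => by cases h; assumption, .parL⟩

@[simp] theorem dep_parR_parR_iff {a b : ELab} : Dep (.parR a) (.parR b) ↔ Dep a b :=
  ⟨fun h => by cases h; assumption, .parR⟩

@[simp] theorem not_dep_parL_parR {a b : ELab} : ¬ Dep (.parL a) (.parR b) := nofun

@[simp] theorem not_dep_parR_parL {a b : ELab} : ¬ Dep (.parR a) (.parL b) := nofun

@[simp] theorem dep_parL_syn_iff {a θL θR : ELab} :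
    Dep (.parL a) (.syn θL θR) ↔ Dep (.parL a) θL ∨ Dep (.parL a) θR :=
  ⟨fun h => by cases h <;> simp_all, fun h => h.elim .synTgtL .synTgtR⟩

@[simp] theorem dep_parR_syn_iff {a θL θR : ELab} :
    Dep (.parR a) (.syn θL θR) ↔ Dep (.parR a) θL ∨ Dep (.parR a) θR :=
  ⟨fun h => by cases h <;> simp_all, fun h => h.elim .synTgtL .synTgtR⟩

@[simp] theorem dep_syn_parL_iff {θL θR a : ELab} :
    Dep (.syn θL θR) (.parL a) ↔ Dep θL (.parL a) ∨ Dep θR (.parL a) :=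
  ⟨fun h => by cases h <;> simp_all, fun h => h.elim .synSrcL .synSrcR⟩

@[simp] theorem dep_syn_parR_iff {θL θR a : ELab} :
    Dep (.syn θL θR) (.parR a) ↔ Dep θL (.parR a) ∨ Dep θR (.parR a) :=
  ⟨fun h => by cases h <;> simp_all, fun h => h.elim .synSrcL .synSrcR⟩

@[simp] theorem dep_syn_syn_iff {θL θR θL' θR' : ELab} :
    Dep (.syn θL θR) (.syn θL' θR') ↔
      Dep θL (.syn θL' θR') ∨ Dep θR (.syn θL' θR') ∨ Dep (.syn θL θR) θL' ∨
        Dep (.syn θL θR) θR' ∨ Dep θL θL' ∨ Dep θR θR' := by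
  constructor
  · intro h; cases h <;> simp_all
  · rintro (h | h | h | h | h | h)
    exacts [.synSrcL h, .synSrcR h, .synTgtL h, .synTgtR h, .synSynL h, .synSynR h]

theorem Bwd.eq_of_key_eq {X θ₁ X₁ θ₂ X₂} (h₁ : Bwd X θ₁ X₁) (h₂ : Bwd X θ₂ X₂)
    (hk : θ₁.key = θ₂.key) : θ₁ = θ₂ ∧ X₁ = X₂ := by
  -- Mismatched rules are impossible: the common key would lie in both parallel components, or a
  -- standard summand would move backward.
  induction h₁ generalizing θ₂ X₂ <;> cases h₂
  all_goals grind [Bwd.key_mem_keys, Proc.std.not_bwd, ELab.key]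

theorem Bwd.conc_of_key_ne {X θ₁ X₁ θ₂ X₂} (h₁ : Bwd X θ₁ X₁) (h₂ : Bwd X θ₂ X₂)
    (hk : θ₁.key ≠ θ₂.key) : Conc θ₁ θ₂ := by
  induction h₁ generalizing θ₂ X₂ <;> cases h₂
  all_goals grind [Conc, Proc.std.not_bwd, ELab.key, dep_parL_parL_iff, dep_parR_parR_iff,
    dep_parL_syn_iff, dep_parR_syn_iff, dep_syn_parL_iff, dep_syn_parR_iff, dep_syn_syn_iff,
    not_dep_parL_parR, not_dep_parR_parL]

theorem Bwd.exists_square {X θ₁ X₁ θ₂ X₂} (h₁ : Bwd X θ₁ X₁) (h₂ : Bwd X θ₂ X₂)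
    (hk : θ₁.key ≠ θ₂.key) : ∃ Z, Bwd X₁ θ₂ Z ∧ Bwd X₂ θ₁ Z := by
  induction h₁ generalizing θ₂ X₂ with
  | act hX => cases h₂ with
    | act => simp [ELab.key] at hk
    | pre h => exact absurd h hX.not_bwd
  | pre h hk₁ ih => cases h₂ with
    | act hX => exact absurd h hX.not_bwd
    | pre h₂ hk₂ =>
      obtain ⟨Z, g₁, g₂⟩ := ih h₂ hk
      exact ⟨_, .pre g₁ hk₂, .pre g₂ hk₁⟩
  | res _ hn₁ hn₂ ih => cases h₂ with
    | res h₂ hm₁ hm₂ =>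
      obtain ⟨Z, g₁, g₂⟩ := ih h₂ hk
      exact ⟨_, .res g₁ hm₁ hm₂, .res g₂ hn₁ hn₂⟩
  | parL h hk₁ ih => cases h₂ with
    | parL h₂ hk₂ =>
      obtain ⟨Z, g₁, g₂⟩ := ih h₂ hk
      exact ⟨_, .parL g₁ hk₂, .parL g₂ hk₁⟩
    | parR h₂ hk₂ =>
      exact ⟨_, .parR h₂ fun m => hk₂ (h.keys_subset m), .parL h fun m => hk₁ (h₂.keys_subset m)⟩
    | syn h₂ h₃ ht hc hkk =>
      obtain ⟨Z, g₁, g₂⟩ := ih h₂ hk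
      exact ⟨_, .syn g₁ h₃ ht hc hkk, .parL g₂ fun m => hk₁ (h₃.keys_subset m)⟩
  | parR h hk₁ ih => cases h₂ with
    | parL h₂ hk₂ =>
      exact ⟨_, .parL h₂ fun m => hk₂ (h.keys_subset m), .parR h fun m => hk₁ (h₂.keys_subset m)⟩
    | parR h₂ hk₂ =>
      obtain ⟨Z, g₁, g₂⟩ := ih h₂ hk
      exact ⟨_, .parR g₁ hk₂, .parR g₂ hk₁⟩
    | syn h₂ h₃ ht hc hkk =>
      obtain ⟨Z, g₁, g₂⟩ := ih h₃ (hkk ▸ hk)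
      exact ⟨_, .syn h₂ g₁ ht hc hkk, .parR g₂ fun m => hk₁ (h₂.keys_subset m)⟩
  | syn h h' ht hc hkk ih ih' => cases h₂ with
    | parL h₂ hk₂ =>
      obtain ⟨Z, g₁, g₂⟩ := ih h₂ hk
      exact ⟨_, .parL g₁ fun m => hk₂ (h'.keys_subset m), .syn g₂ h' ht hc hkk⟩
    | parR h₂ hk₂ =>
      obtain ⟨Z, g₁, g₂⟩ := ih' h₂ (hkk ▸ hk)
      exact ⟨_, .parR g₁ fun m => hk₂ (h.keys_subset m), .syn h g₂ ht hc hkk⟩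
    | syn h₂ h₃ ht₂ hc₂ hkk₂ =>
      obtain ⟨Z, g₁, g₂⟩ := ih h₂ hk
      obtain ⟨Z', g₁', g₂'⟩ := ih' h₃ (hkk ▸ hkk₂ ▸ hk)
      exact ⟨_, .syn g₁ g₁' ht₂ hc₂ hkk₂, .syn g₂ g₂' ht hc hkk⟩
  | sumL h hY ih => cases h₂ with
    | sumL h₂ _ =>
      obtain ⟨Z, g₁, g₂⟩ := ih h₂ hk
      exact ⟨_, .sumL g₁ hY, .sumL g₂ hY⟩
    | sumR h₂ hX => exact absurd h hX.not_bwd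
  | sumR h hX ih => cases h₂ with
    | sumL h₂ hY => exact absurd h hY.not_bwd
    | sumR h₂ _ =>
      obtain ⟨Z, g₁, g₂⟩ := ih h₂ hk
      exact ⟨_, .sumR g₁ hX, .sumR g₂ hX⟩

namespace Trace

def rev : {X Y : Proc} → Trace X Y → Trace Y X
  | _, _, .nil X => .nil X
  | _, _, .cons d θ s T => T.rev.comp (.cons (!d) θ s.reverse (.nil _))

theorem comp_nil : ∀ {X Y} (T : Trace X Y), T.comp (.nil Y) = T
  | _, _, .nil _ => rfl
  | _, _, .cons _ _ _ T => by rw [comp, comp_nil T]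

theorem comp_assoc : ∀ {X Y Z W} (T : Trace X Y) (U : Trace Y Z) (V : Trace Z W),
    (T.comp U).comp V = T.comp (U.comp V)
  | _, _, _, _, .nil _, _, _ => rfl
  | _, _, _, _, .cons _ _ _ T, U, V => by simp only [comp, comp_assoc T U V]

theorem rev_comp : ∀ {X Y Z} (T : Trace X Y) (U : Trace Y Z),
    (T.comp U).rev = U.rev.comp T.rev
  | _, _, _, .nil _, U => by rw [comp, rev, comp_nil]
  | _, _, _, .cons _ _ _ T, U => by rw [comp, rev, rev, rev_comp T U, comp_assoc]

theorem rev_rev : ∀ {X Y} (T : Trace X Y), T.rev.rev = T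
  | _, _, .nil _ => rfl
  | _, _, .cons d _ _ T => by
    rw [rev, rev_comp, rev_rev T]
    cases d <;> rfl

theorem AllDir.comp {d} : ∀ {X Y Z} {T : Trace X Y} {U : Trace Y Z},
    T.AllDir d → U.AllDir d → (T.comp U).AllDir d
  | _, _, _, .nil _, _, _, hU => hU
  | _, _, _, .cons _ _ _ _, _, hT, hU => ⟨hT.1, hT.2.comp hU⟩

theorem AllDir.rev {d} : ∀ {X Y} {T : Trace X Y}, T.AllDir d → T.rev.AllDir (!d)
  | _, _, .nil _, _ => trivial
  | _, _, .cons _ _ _ _, hT => by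
    obtain ⟨rfl, hT⟩ := hT
    exact hT.rev.comp ⟨rfl, trivial⟩

theorem keys_subset_of_allDir_false : ∀ {X Y} {B : Trace X Y}, B.AllDir false →
    Y.keys ⊆ X.keys
  | _, _, .nil _, _ => le_rfl
  | _, _, .cons _ _ s _, hB => by
    obtain ⟨rfl, hB⟩ := hB
    exact (keys_subset_of_allDir_false hB).trans (Bwd.keys_subset s)

theorem eq_nil_of_allDir_false {X} {B : Trace X X} (hB : B.AllDir false) : B = .nil X := by
  cases B with
  | nil => rfl
  | cons d θ s B =>
    obtain ⟨rfl, hB⟩ := hB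
    exact absurd (keys_subset_of_allDir_false hB (Bwd.key_mem_keys s)) (Bwd.key_not_mem_keys s)

end Trace

namespace CEq

theorem comp_right {X Y} {T T' : Trace X Y} (h : CEq T T') :
    ∀ {Z} (U : Trace Y Z), CEq (T.comp U) (T'.comp U) := by
  induction h with
  | refl T => exact fun U => .refl _
  | symm _ ih => exact fun U => (ih U).symm
  | trans _ _ ih₁ ih₂ => exact fun U => (ih₁ U).trans (ih₂ U)
  | congr s _ ih => exact fun U => .congr s (ih U)
  | cancel s s' T => exact fun U => .cancel s s' (T.comp U)
  | square s₁ t₂ s₂ t₁ hc T => exact fun U => .square s₁ t₂ s₂ t₁ hc (T.comp U)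

theorem comp_left {X Y Z} (U : Trace X Y) {T T' : Trace Y Z} (h : CEq T T') :
    CEq (U.comp T) (U.comp T') := by
  induction U with
  | nil => exact h
  | cons _ _ s _ ih => exact .congr s (ih h)

theorem comp_rev_comp {X Y Z} (B : Trace X Y) (T : Trace X Z) : CEq (B.comp (B.rev.comp T)) T := by
  induction B with
  | nil => exact .refl T
  | cons d θ s B ih =>
    rw [Trace.rev, Trace.comp_assoc]
    exact (CEq.congr s (ih _)).trans (.cancel s s.reverse T)

theorem rev_comp_self {X Y} (T : Trace X Y) : CEq (T.rev.comp T) (.nil Y) := by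
  simpa only [Trace.rev_rev, Trace.comp_nil] using comp_rev_comp T.rev (.nil Y)

end CEq

theorem exists_ceq_bwd_cons_of_key_not_mem : ∀ {V X} {B : Trace V X}, B.AllDir false →
    ∀ {θ W} (u : Bwd V θ W), θ.key ∉ X.keys →
      ∃ G : Trace W X, G.AllDir false ∧ CEq B (.cons false θ u G)
  | _, _, .nil _, _, _, _, u, hk => absurd u.key_mem_keys hk
  | _, _, .cons _ φ u₁ B, hB, θ, _, u, hk => by
    obtain ⟨rfl, hB⟩ := hB
    by_cases hkφ : φ.key = θ.key
    · obtain ⟨rfl, rfl⟩ := Bwd.eq_of_key_eq u₁ u hkφ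
      exact ⟨B, hB, .refl _⟩
    · obtain ⟨Z, v, w⟩ := Bwd.exists_square u₁ u hkφ
      obtain ⟨G, hG, hBG⟩ := exists_ceq_bwd_cons_of_key_not_mem hB v hk
      exact ⟨.cons false φ w G, ⟨rfl, hG⟩, (CEq.congr u₁ hBG).trans
        (.square (d₁ := false) (d₂ := false) u₁ v u w (Bwd.conc_of_key_ne u₁ u hkφ) G)⟩

theorem ceq_of_allDir_false {X Y} {B₁ B₂ : Trace X Y} (h₁ : B₁.AllDir false)
    (h₂ : B₂.AllDir false) : CEq B₁ B₂ := by
  induction B₂ with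
  | nil X => rw [Trace.eq_nil_of_allDir_false h₁]; exact .refl _
  | cons d θ u B₂ ih =>
    obtain ⟨rfl, h₂⟩ := h₂
    have hk : θ.key ∉ _ := fun hm =>
      Bwd.key_not_mem_keys u (Trace.keys_subset_of_allDir_false h₂ hm)
    obtain ⟨G, hG, hB₁⟩ := exists_ceq_bwd_cons_of_key_not_mem h₁ u hk
    exact hB₁.trans (.congr u (ih hG h₂))

theorem exists_ceq_parabolic_fwd_cons : ∀ {V W} {B : Trace V W}, B.AllDir false →
    ∀ {Z θ} (s : Fwd Z θ V) {Y} {F : Trace W Y}, F.AllDir true →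
      ∃ (W' : Proc) (B' : Trace Z W') (F' : Trace W' Y),
        B'.AllDir false ∧ F'.AllDir true ∧ CEq (.cons true θ s (B.comp F)) (B'.comp F')
  | _, _, .nil _, _, Z, _, s, _, F, hF => ⟨Z, .nil Z, .cons true _ s F, trivial, ⟨rfl, hF⟩, .refl _⟩
  | _, _, .cons _ φ u B, hB, _, θ, s, _, F, hF => by
    obtain ⟨rfl, hB⟩ := hB
    by_cases hk : θ.key = φ.key
    · obtain ⟨rfl, rfl⟩ := Bwd.eq_of_key_eq s.reverse u hk
      exact ⟨_, B, F, hB, hF, .cancel (d := true) s u _⟩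
    · obtain ⟨Z', u', s'⟩ := Bwd.exists_square s.reverse u hk
      obtain ⟨W', B', F', hB', hF', hce⟩ := exists_ceq_parabolic_fwd_cons hB s'.reverse hF
      have hsq := CEq.square (d₁ := true) (d₂ := false) s u u' s'.reverse
        (Bwd.conc_of_key_ne s.reverse u hk) (B.comp F)
      exact ⟨W', .cons false φ u' B', F', ⟨rfl, hB'⟩, hF',
        hsq.trans (.congr (d := false) u' hce)⟩

theorem Trace.exists_ceq_parabolic {X Y} (T : Trace X Y) :
    ∃ (W : Proc) (B : Trace X W) (F : Trace W Y),
      B.AllDir false ∧ F.AllDir true ∧ CEq T (B.comp F) := by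
  induction T with
  | nil X => exact ⟨X, .nil X, .nil X, trivial, trivial, .refl _⟩
  | cons d θ s T ih =>
    obtain ⟨W, B, F, hB, hF, hT⟩ := ih
    cases d
    · exact ⟨W, .cons false θ s B, F, ⟨rfl, hB⟩, hF, .congr s hT⟩
    · obtain ⟨W', B', F', hB', hF', hce⟩ := exists_ceq_parabolic_fwd_cons hB s hF
      exact ⟨W', B', F', hB', hF', (CEq.congr s hT).trans hce⟩

theorem ceq_nil_of_loop {X} (L : Trace X X) : CEq L (.nil X) := by
  obtain ⟨W, B, F, hB, hF, hL⟩ := L.exists_ceq_parabolic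
  exact hL.trans (((ceq_of_allDir_false hB hF.rev).comp_right F).trans (CEq.rev_comp_self F))

end CCSK

open CCSK in
/-- Causal consistency: any two coinitial and cofinal traces are causally
equivalent. -/
theorem causal_consistency : ∀ (X Y : Proc), Reachable X →
    ∀ T₁ T₂ : Trace X Y, CEq T₁ T₂ := by
  intro X Y _ T₁ T₂
  have h := (ceq_nil_of_loop (T₁.rev.comp T₂)).comp_left T₁
  rw [Trace.comp_nil] at h
  exact h.symm.trans (CEq.comp_rev_comp T₁ T₂)
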